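/- arXiv:1607.00453 — 2 statements merged into one kernel-verified Lean document; each statement's English description precedes it below -/
import Mathlib

section
/- The inversive distance between two planar circles is invariant under inversion in a circle centered at a point outside both disks: if I is inversion in a circle centered at c with radius ρ, and c lies outside both closed disks, then I maps each circle Cᵢ to a circle with computable center and radius, and the inversive distance between the image circles equals ⟨C₁,C₂⟩. -/
/-!
With `u = x - c`, `v = p - c` and `d = ‖v‖² - r²` (the power of `c` with respect to the circle),
the circle relation `‖u - v‖ = r` reads `2 ⟪u, v⟫ = ‖u‖² + d`, and this alone gives
`‖ρ² u / ‖u‖² - ρ² v / d‖ = ρ² r / d`. Scaling centers (about `c`) and radii by `t_i = ρ² / d_i`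
multiplies `‖q₁ - q₂‖² - s₁² - s₂²` and `2 s₁ s₂` alike by `t₁ t₂`, because `t₁ d₁ = t₂ d₂`.
-/

/-- Inversive distance between two planar circles with centers `p₁, p₂` and radii `r₁, r₂`. -/
noncomputable def invDist (p₁ p₂ : ℂ) (r₁ r₂ : ℝ) : ℝ :=
  (‖p₁ - p₂‖ ^ 2 - r₁ ^ 2 - r₂ ^ 2) / (2 * r₁ * r₂)

/-- Inversion in the circle of center `c` and radius `ρ`. -/
noncomputable def circInv (c : ℂ) (ρ : ℝ) (x : ℂ) : ℂ :=
  c + (ρ ^ 2 / ‖x - c‖ ^ 2) • (x - c)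

section InnerProductSpace

variable {E : Type*} [NormedAddCommGroup E] [InnerProductSpace ℝ E]

theorem norm_div_sq_smul_sub_smul_of_norm_sub_eq {u v : E} {r t k : ℝ} (hu : u ≠ 0)
    (huv : ‖u - v‖ = r) (ht : t * (‖v‖ ^ 2 - r ^ 2) = k) :
    ‖(k / ‖u‖ ^ 2) • u - t • v‖ = |t| * r := by
  have hr : 0 ≤ r := huv ▸ norm_nonneg _
  have hu2 : ‖u‖ ^ 2 ≠ 0 := by positivity
  have hinner : 2 * inner ℝ u v = ‖u‖ ^ 2 + ‖v‖ ^ 2 - r ^ 2 := by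
    rw [← huv, norm_sub_sq_real]; ring
  rw [← sq_eq_sq₀ (norm_nonneg _) (by positivity), norm_sub_sq_real, norm_smul, norm_smul,
    real_inner_smul_left, real_inner_smul_right]
  simp only [Real.norm_eq_abs, mul_pow, sq_abs, ← ht]
  field_simp
  linear_combination (-t ^ 2 * (‖v‖ ^ 2 - r ^ 2)) * hinner

theorem norm_smul_sub_smul_sq_sub (v₁ v₂ : E) {r₁ r₂ t₁ t₂ k : ℝ}
    (ht₁ : t₁ * (‖v₁‖ ^ 2 - r₁ ^ 2) = k) (ht₂ : t₂ * (‖v₂‖ ^ 2 - r₂ ^ 2) = k) :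
    ‖t₁ • v₁ - t₂ • v₂‖ ^ 2 - (t₁ * r₁) ^ 2 - (t₂ * r₂) ^ 2
      = t₁ * t₂ * (‖v₁ - v₂‖ ^ 2 - r₁ ^ 2 - r₂ ^ 2) := by
  rw [norm_sub_sq_real, norm_sub_sq_real, norm_smul, norm_smul, real_inner_smul_left,
    real_inner_smul_right, Real.norm_eq_abs, Real.norm_eq_abs, mul_pow, mul_pow, sq_abs, sq_abs]
  linear_combination t₁ * ht₁ + t₂ * ht₂ - t₂ * ht₁ - t₁ * ht₂

end InnerProductSpace

theorem norm_circInv_sub_of_norm_sub_eq {c p x : ℂ} {r : ℝ} (ρ : ℝ) (hc : r < ‖p - c‖)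
    (hx : ‖x - p‖ = r) :
    ‖circInv c ρ x - (c + (ρ ^ 2 / (‖p - c‖ ^ 2 - r ^ 2)) • (p - c))‖
      = ρ ^ 2 * r / |‖p - c‖ ^ 2 - r ^ 2| := by
  have hr : 0 ≤ r := hx ▸ norm_nonneg _
  have hd : ‖p - c‖ ^ 2 - r ^ 2 ≠ 0 := by nlinarith
  have hxc : x - c ≠ 0 := by
    rintro hxc
    rw [sub_eq_zero.1 hxc, norm_sub_rev] at hx
    exact hc.ne' hx
  rw [circInv, add_sub_add_left_eq_sub,
    norm_div_sq_smul_sub_smul_of_norm_sub_eq hxc (by rwa [sub_sub_sub_cancel_right])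
      (div_mul_cancel₀ _ hd), abs_div, abs_sq, div_mul_eq_mul_div]

theorem invDist_add_smul_add_smul (c v₁ v₂ : ℂ) {r₁ r₂ t₁ t₂ k : ℝ} (ht : t₁ * t₂ ≠ 0)
    (ht₁ : t₁ * (‖v₁‖ ^ 2 - r₁ ^ 2) = k) (ht₂ : t₂ * (‖v₂‖ ^ 2 - r₂ ^ 2) = k) :
    invDist (c + t₁ • v₁) (c + t₂ • v₂) (t₁ * r₁) (t₂ * r₂) = invDist (c + v₁) (c + v₂) r₁ r₂ := by
  rw [invDist, invDist, add_sub_add_left_eq_sub, add_sub_add_left_eq_sub,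
    norm_smul_sub_smul_sq_sub v₁ v₂ ht₁ ht₂,
    show 2 * (t₁ * r₁) * (t₂ * r₂) = t₁ * t₂ * (2 * r₁ * r₂) by ring, mul_div_mul_left _ _ ht]

theorem invDist_inversion_invariant (p₁ p₂ c : ℂ) (r₁ r₂ ρ : ℝ)
    (h₁ : 0 < r₁) (h₂ : 0 < r₂) (hρ : 0 < ρ)
    (hc₁ : ‖p₁ - c‖ > r₁) (hc₂ : ‖p₂ - c‖ > r₂)
    (q₁ q₂ : ℂ) (s₁ s₂ : ℝ)
    (hq₁ : q₁ = c + (ρ ^ 2 / (‖p₁ - c‖ ^ 2 - r₁ ^ 2)) • (p₁ - c))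
    (hq₂ : q₂ = c + (ρ ^ 2 / (‖p₂ - c‖ ^ 2 - r₂ ^ 2)) • (p₂ - c))
    (hs₁ : s₁ = ρ ^ 2 * r₁ / |‖p₁ - c‖ ^ 2 - r₁ ^ 2|)
    (hs₂ : s₂ = ρ ^ 2 * r₂ / |‖p₂ - c‖ ^ 2 - r₂ ^ 2|) :
    (∀ x : ℂ, ‖x - p₁‖ = r₁ → ‖circInv c ρ x - q₁‖ = s₁) ∧
    (∀ x : ℂ, ‖x - p₂‖ = r₂ → ‖circInv c ρ x - q₂‖ = s₂) ∧
    invDist q₁ q₂ s₁ s₂ = invDist p₁ p₂ r₁ r₂ := by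
  subst hq₁ hq₂ hs₁ hs₂
  have hd₁ : 0 < ‖p₁ - c‖ ^ 2 - r₁ ^ 2 := by nlinarith
  have hd₂ : 0 < ‖p₂ - c‖ ^ 2 - r₂ ^ 2 := by nlinarith
  refine ⟨fun x hx => norm_circInv_sub_of_norm_sub_eq ρ hc₁ hx,
    fun x hx => norm_circInv_sub_of_norm_sub_eq ρ hc₂ hx, ?_⟩
  rw [abs_of_pos hd₁, abs_of_pos hd₂, mul_div_right_comm, mul_div_right_comm,
    invDist_add_smul_add_smul c _ _ (by positivity) (div_mul_cancel₀ _ hd₁.ne')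
      (div_mul_cancel₀ _ hd₂.ne'), add_sub_cancel, add_sub_cancel]
end

section
/- Under the hypotheses |z-f₁| = r₁ + r and |z-f₂| = r₂ - r with r > 0, the inversive distance between C(z,r) and its rotation C(𝔯(z),r) about i/√3 by 2π/3 is given by h(z) = |√3 z - i|²/(2(|z-f₁| - r₁)²) - 1. -/
open Complex

/-- Rotation of `ℂ` by angle `2π/3` about the point `i/√3`. -/
noncomputable def rot (z : ℂ) : ℂ :=
  I / Real.sqrt 3 + Complex.exp (2 * Real.pi * I / 3) * (z - I / Real.sqrt 3)

/-! A rotation by `2π/3` moves every point by `√3` times its distance to the centre `i/√3`,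
and `|√3 z - i|` is exactly that product, so `|z - 𝔯(z)| = |√3 z - i|`. The formula then
follows by substituting the radius `r = |z - f₁| - r₁` forced by external tangency into the
inversive distance of two circles of equal radius. -/

lemma invDist_of_eq_radius (p q : ℂ) {r : ℝ} (hr : r ≠ 0) :
    invDist p q r r = ‖p - q‖ ^ 2 / (2 * r ^ 2) - 1 := by
  unfold invDist
  field_simp
  ring

lemma norm_exp_two_pi_div_three_mul_I_sub_one :
    ‖exp (2 * Real.pi * I / 3) - 1‖ = Real.sqrt 3 := by
  have hangle : 2 * (Real.pi : ℂ) * I / 3 = I * ((2 * Real.pi / 3 : ℝ) : ℂ) := by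
    push_cast
    ring
  rw [hangle, norm_exp_I_mul_ofReal_sub_one,
    show 2 * Real.pi / 3 / 2 = Real.pi / 3 by ring, Real.sin_pi_div_three, Real.norm_of_nonneg (by positivity)]
  ring

lemma norm_sub_rot (z : ℂ) : ‖z - rot z‖ = ‖Real.sqrt 3 * z - I‖ := by
  have hs3 : (Real.sqrt 3 : ℂ) ≠ 0 := by exact_mod_cast (Real.sqrt_pos.2 three_pos).ne'
  have hmove : z - rot z = -(exp (2 * Real.pi * I / 3) - 1) * (z - I / Real.sqrt 3) := by
    unfold rot
    ring
  have hscale : Real.sqrt 3 * z - I = Real.sqrt 3 * (z - I / Real.sqrt 3) := by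
    field_simp
  rw [hmove, hscale, norm_mul, norm_mul, norm_neg, norm_exp_two_pi_div_three_mul_I_sub_one,
    norm_real, Real.norm_of_nonneg (Real.sqrt_nonneg 3)]

theorem invDist_rotated_cousin_of_tangency_general (z f₁ : ℂ) (r r₁ : ℝ)
    (hr : 0 < r) (hext : ‖z - f₁‖ = r₁ + r) :
    invDist z (rot z) r r = ‖Real.sqrt 3 * z - I‖ ^ 2 / (2 * (‖z - f₁‖ - r₁) ^ 2) - 1 := by
  rw [show ‖z - f₁‖ - r₁ = r by linarith, invDist_of_eq_radius _ _ hr.ne', norm_sub_rot]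

theorem invDist_rotated_cousin_of_tangency (z f₁ f₂ : ℂ) (r r₁ r₂ : ℝ)
    (hr : 0 < r) (hext : ‖z - f₁‖ = r₁ + r) (hint : ‖z - f₂‖ = r₂ - r) :
    invDist z (rot z) r r = ‖Real.sqrt 3 * z - I‖ ^ 2 / (2 * (‖z - f₁‖ - r₁) ^ 2) - 1 :=
  invDist_rotated_cousin_of_tangency_general z f₁ r r₁ hr hext
end
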